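/- The first and fourth Maxwell-GLM equations are consequences of the potential definitions: let A : ℝ × (Fin 3 → ℝ) → (Fin 3 → ℝ) and Z : ℝ × (Fin 3 → ℝ) → ℝ be twice continuously differentiable (ContDiff ℝ 2 on the product space). Define B(t,x) = curlₓ A(t,·)(x) + ∇ₓZ(t,x), E(t,x) = −∂ₜA(t,x), q(t,x) = divₓ A(t,·)(x) and p(t,x) = −∂ₜZ(t,x). Then for every (t,x): (i) for every component i ∈ Fin 3, t ↦ Bᵢ(t,x) is differentiable and ∂ₜBᵢ(t,x) + (curlₓ E(t,·)(x))ᵢ + ∂ᵢp(t,x) = 0, i.e. ∂ₜB + ∇×E + ∇p = 0; and (ii) t ↦ q(t,x) is differentiable and ∂ₜq(t,x) + divₓ E(t,·)(x) = 0, i.e. ∂ₜq + ∇·E = 0. -/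

import Mathlib

/-!
Time differentiation commutes with the spatial partial derivatives because the mixed second
partials of a `C²` function agree. Hence `∂ₜB = ∇×(∂ₜA) + ∇(∂ₜZ) = -∇×E - ∇p` and
`∂ₜq = ∇·(∂ₜA) = -∇·E`.
-/

/-- Partial derivative of `f` at `x` in the `j`-th coordinate direction. -/
noncomputable def pderiv3 (f : (Fin 3 → ℝ) → ℝ) (j : Fin 3) (x : Fin 3 → ℝ) : ℝ :=
  fderiv ℝ f x (Pi.single j 1)

/-- The curl of a vector field `F : ℝ³ → ℝ³` at a point `x`. -/
noncomputable def curl3 (F : (Fin 3 → ℝ) → (Fin 3 → ℝ)) (x : Fin 3 → ℝ) : Fin 3 → ℝ :=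
  ![pderiv3 (fun y => F y 2) 1 x - pderiv3 (fun y => F y 1) 2 x,
    pderiv3 (fun y => F y 0) 2 x - pderiv3 (fun y => F y 2) 0 x,
    pderiv3 (fun y => F y 1) 0 x - pderiv3 (fun y => F y 0) 1 x]

/-- The divergence of a vector field `F : ℝ³ → ℝ³` at a point `x`. -/
noncomputable def div3 (F : (Fin 3 → ℝ) → (Fin 3 → ℝ)) (x : Fin 3 → ℝ) : ℝ :=
  ∑ j, pderiv3 (fun y => F y j) j x

/-- The gradient of a scalar field `f : ℝ³ → ℝ` at a point `x`. -/
noncomputable def grad3 (f : (Fin 3 → ℝ) → ℝ) (x : Fin 3 → ℝ) : Fin 3 → ℝ :=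
  fun j => pderiv3 f j x

open ContinuousLinearMap

section Slices

variable {E G : Type*} [NormedAddCommGroup E] [NormedSpace ℝ E]
  [NormedAddCommGroup G] [NormedSpace ℝ G] {f : ℝ × E → G}

theorem DifferentiableAt.hasDerivAt_comp_prodMk_left {t : ℝ} {x : E}
    (hf : DifferentiableAt ℝ f (t, x)) :
    HasDerivAt (fun s => f (s, x)) (fderiv ℝ f (t, x) (1, 0)) t := by
  simpa [Function.comp_def] using
    (hf.hasFDerivAt.comp t (hasFDerivAt_prodMk_left t x)).hasDerivAt

theorem DifferentiableAt.fderiv_comp_prodMk_right_apply {t : ℝ} {x : E}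
    (hf : DifferentiableAt ℝ f (t, x)) (v : E) :
    fderiv ℝ (fun y => f (t, y)) x v = fderiv ℝ f (t, x) (0, v) := by
  rw [show (fun y => f (t, y)) = f ∘ fun y => (t, y) from rfl,
    (hf.hasFDerivAt.comp x (hasFDerivAt_prodMk_right t x)).fderiv]
  simp

/-- Both sides are the second derivative of `f` at `(t, x)` evaluated on `(1, 0)` and `(0, v)`,
in opposite orders, so this is the symmetry of the second derivative of a `C²` map. -/
theorem ContDiff.hasDerivAt_fderiv_comp_prodMk_right (hf : ContDiff ℝ 2 f) (t : ℝ) (x v : E) :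
    HasDerivAt (fun s => fderiv ℝ (fun y => f (s, y)) x v)
      (fderiv ℝ (fun y => deriv (fun s => f (s, y)) t) x v) t := by
  have hdiff : Differentiable ℝ f := hf.differentiable (by norm_num)
  have hD : Differentiable ℝ (fderiv ℝ f) :=
    (hf.fderiv_right (m := 1) (by norm_num)).differentiable one_ne_zero
  have hdir : ∀ w p, HasFDerivAt (fun p => fderiv ℝ f p w) ((fderiv ℝ (fderiv ℝ f) p).flip w) p :=
    fun w p => by simpa using (hD p).hasFDerivAt.clm_apply (hasFDerivAt_const w p)
  have hspace : (fun s => fderiv ℝ (fun y => f (s, y)) x v) = fun s => fderiv ℝ f (s, x) (0, v) :=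
    funext fun s => (hdiff _).fderiv_comp_prodMk_right_apply v
  have htime : (fun y => deriv (fun s => f (s, y)) t) = fun y => fderiv ℝ f (t, y) (1, 0) :=
    funext fun y => (hdiff _).hasDerivAt_comp_prodMk_left.deriv
  rw [hspace, htime, (hdir _ _).differentiableAt.fderiv_comp_prodMk_right_apply, (hdir _ _).fderiv,
    flip_apply, ← hf.contDiffAt.isSymmSndFDerivAt (by simp)]
  simpa [(hdir _ _).fderiv] using (hdir (0, v) (t, x)).differentiableAt.hasDerivAt_comp_prodMk_left

end Slices

theorem ContDiff.hasDerivAt_pderiv3 {f : ℝ × (Fin 3 → ℝ) → ℝ} (hf : ContDiff ℝ 2 f) (t : ℝ)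
    (x : Fin 3 → ℝ) (j : Fin 3) :
    HasDerivAt (fun s => pderiv3 (fun y => f (s, y)) j x)
      (pderiv3 (fun y => deriv (fun s => f (s, y)) t) j x) t :=
  hf.hasDerivAt_fderiv_comp_prodMk_right t x (Pi.single j 1)

theorem ContDiff.hasDerivAt_curl3 {A : ℝ × (Fin 3 → ℝ) → Fin 3 → ℝ} (hA : ContDiff ℝ 2 A)
    (t : ℝ) (x : Fin 3 → ℝ) (i : Fin 3) :
    HasDerivAt (fun s => curl3 (fun y => A (s, y)) x i)
      (curl3 (fun y k => deriv (fun s => A (s, y) k) t) x i) t := by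
  have h : ∀ k j, HasDerivAt (fun s => pderiv3 (fun y => A (s, y) k) j x)
      (pderiv3 (fun y => deriv (fun s => A (s, y) k) t) j x) t :=
    fun k j => (contDiff_pi.mp hA k).hasDerivAt_pderiv3 t x j
  fin_cases i <;> exact (h _ _).sub (h _ _)

theorem ContDiff.hasDerivAt_div3 {A : ℝ × (Fin 3 → ℝ) → Fin 3 → ℝ} (hA : ContDiff ℝ 2 A)
    (t : ℝ) (x : Fin 3 → ℝ) :
    HasDerivAt (fun s => div3 (fun y => A (s, y)) x)
      (div3 (fun y k => deriv (fun s => A (s, y) k) t) x) t :=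
  HasDerivAt.fun_sum fun j _ => (contDiff_pi.mp hA j).hasDerivAt_pderiv3 t x j

theorem pderiv3_neg (g : (Fin 3 → ℝ) → ℝ) (j : Fin 3) (x : Fin 3 → ℝ) :
    pderiv3 (fun y => -g y) j x = -pderiv3 g j x := by
  simp [pderiv3]

theorem curl3_neg (F : (Fin 3 → ℝ) → Fin 3 → ℝ) (x : Fin 3 → ℝ) :
    curl3 (fun y => -F y) x = -curl3 F x := by
  ext i
  fin_cases i <;> simp [curl3, pderiv3_neg] <;> ring

theorem div3_neg (F : (Fin 3 → ℝ) → Fin 3 → ℝ) (x : Fin 3 → ℝ) :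
    div3 (fun y => -F y) x = -div3 F x := by
  simp [div3, pderiv3_neg]

/-- The first and fourth Maxwell-GLM equations, `∂ₜB + ∇×E + ∇p = 0` and
`∂ₜq + ∇·E = 0`, are consequences of the definitions `B = ∇×A + ∇Z`,
`E = -∂ₜA`, `q = ∇·A`, `p = -∂ₜZ` from C² potentials `A` and `Z`. -/
theorem maxwell_glm_from_potentials
    (A : ℝ × (Fin 3 → ℝ) → (Fin 3 → ℝ)) (Z : ℝ × (Fin 3 → ℝ) → ℝ)
    (hA : ContDiff ℝ 2 A) (hZ : ContDiff ℝ 2 Z)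
    (B E : ℝ → (Fin 3 → ℝ) → Fin 3 → ℝ)
    (q p : ℝ → (Fin 3 → ℝ) → ℝ)
    (hB : ∀ (t : ℝ) (x : Fin 3 → ℝ),
      B t x = curl3 (fun y => A (t, y)) x + grad3 (fun y => Z (t, y)) x)
    (hE : ∀ (t : ℝ) (x : Fin 3 → ℝ) (i : Fin 3),
      E t x i = -deriv (fun s => A (s, x) i) t)
    (hq : ∀ (t : ℝ) (x : Fin 3 → ℝ), q t x = div3 (fun y => A (t, y)) x)
    (hp : ∀ (t : ℝ) (x : Fin 3 → ℝ), p t x = -deriv (fun s => Z (s, x)) t) :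
    ∀ (t : ℝ) (x : Fin 3 → ℝ),
      (∀ i : Fin 3,
        DifferentiableAt ℝ (fun s => B s x i) t ∧
        deriv (fun s => B s x i) t + curl3 (fun y => E t y) x i
          + pderiv3 (fun y => p t y) i x = 0) ∧
      (DifferentiableAt ℝ (fun s => q s x) t ∧
        deriv (fun s => q s x) t + div3 (fun y => E t y) x = 0) := by
  intro t x
  have hEt : (fun y => E t y) = fun y => -fun k => deriv (fun s => A (s, y) k) t :=
    funext fun y => funext (hE t y)
  have hpt : (fun y => p t y) = fun y => -deriv (fun s => Z (s, y)) t := funext (hp t)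
  refine ⟨fun i => ?_, ?_⟩
  · have hBi : HasDerivAt (fun s => B s x i)
        (curl3 (fun y k => deriv (fun s => A (s, y) k) t) x i
          + pderiv3 (fun y => deriv (fun s => Z (s, y)) t) i x) t := by
      simp only [hB, Pi.add_apply]
      exact (hA.hasDerivAt_curl3 t x i).add (hZ.hasDerivAt_pderiv3 t x i)
    refine ⟨hBi.differentiableAt, ?_⟩
    rw [hBi.deriv, hEt, hpt, curl3_neg, pderiv3_neg, Pi.neg_apply]
    ring
  · have hqx : HasDerivAt (fun s => q s x)
        (div3 (fun y k => deriv (fun s => A (s, y) k) t) x) t := by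
      simp only [hq]
      exact hA.hasDerivAt_div3 t x
    refine ⟨hqx.differentiableAt, ?_⟩
    rw [hqx.deriv, hEt, div3_neg]
    ring
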